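/- For a symmetric positive definite matrix H and a diagonal matrix C with all diagonal entries strictly less than 1 (and positive), each eigenvalue of HC is strictly less than the corresponding eigenvalue of H: λⱼ(HC) < λⱼ(H). -/

import Mathlib

/-!
Factor `H = Rᴴ R`. Then `HC` and `H` have the same characteristic polynomials as the symmetric
matrices `R C Rᴴ` and `R Rᴴ`, whose difference `R (1 - C) Rᴴ` is positive definite. A strict
Loewner inequality between symmetric operators gives strict inequalities between their sorted
eigenvalues (Courant–Fischer): for each `k`, the span of the top `k + 1` eigenvectors of the smaller
operator meets the span of the bottom `n - k` eigenvectors of the larger one in a nonzero vector,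
whose Rayleigh quotients separate the two `k`-th eigenvalues.
-/

open Matrix

open Module Submodule in
theorem Module.Basis.finrank_span_image_finset {ι K V : Type*} [DivisionRing K] [AddCommGroup V]
    [Module K V] (b : Basis ι K V) (s : Finset ι) : finrank K (span K (b '' s)) = s.card := by
  rw [Set.image_eq_range]
  exact (finrank_span_eq_card (b.linearIndependent.comp _ Subtype.val_injective)).trans
    (Fintype.card_coe s)

theorem OrthonormalBasis.repr_apply_eq_zero_of_mem_span_image {ι 𝕜 E : Type*} [Fintype ι]
    [RCLike 𝕜] [NormedAddCommGroup E] [InnerProductSpace 𝕜 E] (b : OrthonormalBasis ι 𝕜 E)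
    {s : Set ι} {x : E} (hx : x ∈ Submodule.span 𝕜 (b '' s)) {i : ι} (hi : i ∉ s) :
    b.repr x i = 0 := by
  rw [← b.coe_toBasis, Module.Basis.mem_span_image] at hx
  rw [← b.coe_toBasis_repr_apply]
  exact Finsupp.notMem_support_iff.mp fun h => hi (hx h)

namespace LinearMap.IsSymmetric

variable {𝕜 E : Type*} [RCLike 𝕜] [NormedAddCommGroup E] [InnerProductSpace 𝕜 E]
  [FiniteDimensional 𝕜 E] {T : E →ₗ[𝕜] E} {n : ℕ} (hT : T.IsSymmetric)
  (hn : Module.finrank 𝕜 E = n)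

include hT in
lemma re_inner_apply_self_eq_sum (x : E) :
    RCLike.re (inner 𝕜 (T x) x) =
      ∑ i, hT.eigenvalues hn i * ‖(hT.eigenvectorBasis hn).repr x i‖ ^ 2 := by
  rw [← (hT.eigenvectorBasis hn).repr.inner_map_map, PiLp.inner_apply, map_sum]
  refine Finset.sum_congr rfl fun i _ => ?_
  rw [eigenvectorBasis_apply_self_apply, RCLike.inner_apply', map_mul (starRingEnd 𝕜),
    RCLike.conj_ofReal, mul_assoc, RCLike.conj_mul, ← RCLike.ofReal_pow, ← RCLike.ofReal_mul,
    RCLike.ofReal_re]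

lemma mul_norm_sq_le_re_inner_of_mem_span {s : Set (Fin n)} {c : ℝ}
    (hc : ∀ i ∈ s, c ≤ hT.eigenvalues hn i) {x : E}
    (hx : x ∈ Submodule.span 𝕜 (hT.eigenvectorBasis hn '' s)) :
    c * ‖x‖ ^ 2 ≤ RCLike.re (inner 𝕜 (T x) x) := by
  rw [hT.re_inner_apply_self_eq_sum hn, ← (hT.eigenvectorBasis hn).repr.norm_map,
    EuclideanSpace.norm_sq_eq, Finset.mul_sum]
  refine Finset.sum_le_sum fun i _ => ?_
  by_cases hi : i ∈ s
  · exact mul_le_mul_of_nonneg_right (hc i hi) (sq_nonneg _)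
  · simp [(hT.eigenvectorBasis hn).repr_apply_eq_zero_of_mem_span_image hx hi]

lemma re_inner_le_mul_norm_sq_of_mem_span {s : Set (Fin n)} {c : ℝ}
    (hc : ∀ i ∈ s, hT.eigenvalues hn i ≤ c) {x : E}
    (hx : x ∈ Submodule.span 𝕜 (hT.eigenvectorBasis hn '' s)) :
    RCLike.re (inner 𝕜 (T x) x) ≤ c * ‖x‖ ^ 2 := by
  rw [hT.re_inner_apply_self_eq_sum hn, ← (hT.eigenvectorBasis hn).repr.norm_map,
    EuclideanSpace.norm_sq_eq, Finset.mul_sum]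
  refine Finset.sum_le_sum fun i _ => ?_
  by_cases hi : i ∈ s
  · exact mul_le_mul_of_nonneg_right (hc i hi) (sq_nonneg _)
  · simp [(hT.eigenvectorBasis hn).repr_apply_eq_zero_of_mem_span_image hx hi]

theorem eigenvalues_lt_eigenvalues_of_re_inner_lt {S : E →ₗ[𝕜] E} (hS : S.IsSymmetric)
    (h : ∀ x ≠ 0, RCLike.re (inner 𝕜 (T x) x) < RCLike.re (inner 𝕜 (S x) x)) (k : Fin n) :
    hT.eigenvalues hn k < hS.eigenvalues hn k := by
  let U := Submodule.span 𝕜 (hT.eigenvectorBasis hn '' ↑(Finset.Iic k))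
  let W := Submodule.span 𝕜 (hS.eigenvectorBasis hn '' ↑(Finset.Ici k))
  have hU : Module.finrank 𝕜 U = k + 1 :=
    ((hT.eigenvectorBasis hn).toBasis.finrank_span_image_finset _).trans (Fin.card_Iic k)
  have hW : Module.finrank 𝕜 W = n - k :=
    ((hS.eigenvectorBasis hn).toBasis.finrank_span_image_finset _).trans (Fin.card_Ici k)
  have hUW : ¬ Disjoint U W := fun hdisj => by
    have := Submodule.finrank_add_finrank_le_of_disjoint hdisj
    omega
  obtain ⟨x, hxU, hxW, hx⟩ : ∃ x ∈ U, x ∈ W ∧ x ≠ 0 := by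
    simpa [Submodule.disjoint_def] using hUW
  have hlow := hT.mul_norm_sq_le_re_inner_of_mem_span hn
    (fun i hi => hT.eigenvalues_antitone hn (Finset.mem_Iic.mp hi)) hxU
  have hup := hS.re_inner_le_mul_norm_sq_of_mem_span hn
    (fun i hi => hS.eigenvalues_antitone hn (Finset.mem_Ici.mp hi)) hxW
  have hpos : 0 < ‖x‖ ^ 2 := by positivity
  exact lt_of_mul_lt_mul_right ((hlow.trans_lt (h x hx)).trans_le hup) hpos.le

end LinearMap.IsSymmetric

namespace Matrix.IsHermitian

variable {𝕜 ι : Type*} [RCLike 𝕜] [Fintype ι] [DecidableEq ι] {A B : Matrix ι ι 𝕜}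

lemma inner_toEuclideanLin_self (hA : A.IsHermitian) (x : EuclideanSpace 𝕜 ι) :
    inner 𝕜 (toEuclideanLin A x) x = star (WithLp.ofLp x) ⬝ᵥ A *ᵥ WithLp.ofLp x := by
  rw [isSymmetric_toEuclideanLin_iff.mpr hA, EuclideanSpace.inner_eq_star_dotProduct]
  simp [dotProduct_comm]

open scoped ComplexOrder in
theorem eigenvalues₀_lt_eigenvalues₀_of_posDef_sub (hA : A.IsHermitian) (hB : B.IsHermitian)
    (hAB : (B - A).PosDef) (k : Fin (Fintype.card ι)) : hA.eigenvalues₀ k < hB.eigenvalues₀ k := by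
  refine LinearMap.IsSymmetric.eigenvalues_lt_eigenvalues_of_re_inner_lt _ _ _ (fun x hx => ?_) k
  have hpos := (RCLike.pos_iff.mp
    (hAB.dotProduct_mulVec_pos (x := WithLp.ofLp x) (by simpa using hx))).1
  rw [sub_mulVec, dotProduct_sub, map_sub, sub_pos] at hpos
  simpa only [hA.inner_toEuclideanLin_self, hB.inner_toEuclideanLin_self] using hpos

lemma sort_roots_charpoly_eq_eigenvalues₀_real {A : Matrix ι ι ℝ} (hA : A.IsHermitian) :
    A.charpoly.roots.sort (· ≥ ·) = List.ofFn hA.eigenvalues₀ := by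
  simpa using hA.sort_roots_charpoly_eq_eigenvalues₀

end Matrix.IsHermitian

open scoped MatrixOrder in
theorem stmt_9_general (n : ℕ) (H C : Matrix (Fin n) (Fin n) ℝ)
    (hH : H.PosDef) (hC : C.IsDiag) (hC2 : ∀ i, C i i < 1) :
    Multiset.card (H * C).charpoly.roots = n ∧
    Multiset.card H.charpoly.roots = n ∧
    ∀ j : Fin n,
      (((H * C).charpoly.roots.sort (· ≥ ·)).getD j 0) <
        ((H.charpoly.roots.sort (· ≥ ·)).getD j 0) := by
  obtain ⟨R, rfl⟩ := CStarAlgebra.nonneg_iff_eq_star_mul_self.mp hH.posSemidef.nonneg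
  rw [star_eq_conjTranspose] at hH ⊢
  have hR : IsUnit R := isUnit_of_mul_isUnit_right hH.isUnit
  have hCh : C.IsHermitian := by
    rw [← hC.diagonal_diag]
    exact isHermitian_diagonal _
  have hM : (R * C * Rᴴ).IsHermitian := isHermitian_mul_mul_conjTranspose R hCh
  have hN : (R * Rᴴ).IsHermitian := isHermitian_mul_conjTranspose_self R
  have hMN : (R * Rᴴ - R * C * Rᴴ).PosDef := by
    have h1C : (1 - C).PosDef := by
      rw [← hC.diagonal_diag, ← diagonal_one, diagonal_sub, posDef_diagonal_iff]
      exact fun i => sub_pos.mpr (hC2 i)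
    simpa [mul_sub, sub_mul] using
      h1C.mul_mul_conjTranspose_same (vecMul_injective_iff_isUnit.mpr hR)
  have hHC : (Rᴴ * R * C).charpoly = (R * C * Rᴴ).charpoly := by
    rw [mul_assoc, charpoly_mul_comm, mul_assoc]
  rw [hHC, charpoly_mul_comm Rᴴ R]
  refine ⟨by rw [hM.roots_charpoly_eq_eigenvalues]; simp,
    by rw [hN.roots_charpoly_eq_eigenvalues]; simp, fun j => ?_⟩
  rw [hM.sort_roots_charpoly_eq_eigenvalues₀_real, hN.sort_roots_charpoly_eq_eigenvalues₀_real]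
  simpa using
    hM.eigenvalues₀_lt_eigenvalues₀_of_posDef_sub hN hMN (j.cast (Fintype.card_fin n).symm)

/-- For symmetric positive definite `H` and diagonal `C` with entries in `(0,1)`, each
eigenvalue of `H*C` (both spectra are real and ordered decreasingly) is strictly smaller
than the corresponding eigenvalue of `H`: `λⱼ(HC) < λⱼ(H)`. -/
theorem stmt_9 (n : ℕ) (H C : Matrix (Fin n) (Fin n) ℝ)
    (hH : H.PosDef) (hC : C.IsDiag) (hC1 : ∀ i, 0 < C i i) (hC2 : ∀ i, C i i < 1) :
    Multiset.card (H * C).charpoly.roots = n ∧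
    Multiset.card H.charpoly.roots = n ∧
    ∀ j : Fin n,
      (((H * C).charpoly.roots.sort (· ≥ ·)).getD j 0) <
        ((H.charpoly.roots.sort (· ≥ ·)).getD j 0) :=
  stmt_9_general n H C hH hC hC2
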